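/- arXiv:math/0501004 — 2 statements merged into one kernel-verified Lean document; each statement's English description precedes it below -/
import Mathlib

section
/- There exists p₀ such that for every prime p > p₀ with p ≡ 1 (mod 3), one has ρ(2/3, p) > 0.23. In particular, ρ(2/3, p) > 2/9 for all sufficiently large primes p ≡ 1 (mod 3). -/
open Finset

/-- `Λ₃(f; N) = N⁻² ∑_{n,d ∈ ℤ/N} f(n) f(n+d) f(n+2d)`. -/
noncomputable def lambda3 (N : ℕ) (f : ZMod N → ℝ) : ℝ :=
  ((N : ℝ) ^ 2)⁻¹ * ∑ n ∈ Finset.range N, ∑ d ∈ Finset.range N,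
    f n * f (n + d) * f (n + 2 * d)

/-- `𝔼(f) = N⁻¹ ∑_{n ∈ ℤ/N} f(n)`. -/
noncomputable def expect (N : ℕ) (f : ZMod N → ℝ) : ℝ :=
  (N : ℝ)⁻¹ * ∑ n ∈ Finset.range N, f n

/-- `ρ(υ, N)`: the minimum of `Λ₃(f; N)` over `f : ℤ/N → [0,1]` with `𝔼(f) ≥ υ`. -/
noncomputable def rho (υ : ℝ) (N : ℕ) : ℝ :=
  sInf {x : ℝ | ∃ f : ZMod N → ℝ,
    (∀ n, f n ∈ Set.Icc (0 : ℝ) 1) ∧ υ ≤ expect N f ∧ lambda3 N f = x}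

/-!
Write `S = ∑ f` and `F = 𝓕 f`. Fourier expansion gives
`p ∑_{x,z} f(x) f(2z - x) f(z) = S³ + ∑_{r ≠ 0} F(r)² F(-2r)`, and Parseval together with `f² ≤ f`
gives `∑_{r ≠ 0} |F(r)|² ≤ pS - S²`; so a bound `|F(r)| ≤ B` for all `r ≠ 0` yields the count
`≥ S³ - B (pS - S²)`.

For `r ≠ 0` we have `F(r) = -𝓕(1 - f)(r)`, and `|𝓕 g (r)| = Re ∑ g(n) wₙ` for unit complex numbers
`wₙ` whose first six power sums vanish once `p > 6`. An explicit sextic `Q` satisfies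
`g x ≤ g / 2 + Q(x)` for `g ∈ [0, 1]`, `x ∈ [-1, 1]`; since `Re (w ^ k) = T_k (Re w)` on the unit
circle, `∑ₙ Q(Re wₙ)` is `p` times the constant Chebyshev coefficient `8265/65536` of `Q`. Hence
`B = (p - S)/2 + 8265/65536 · p` works, and `S ≥ 2p/3` then forces `Λ₃ ≥ 0.2305`.
-/

open Polynomial Polynomial.Chebyshev
open scoped ZMod

section ZModN

variable {N : ℕ} [NeZero N]

theorem sum_range_eq_sum_zmod {M : Type*} [AddCommMonoid M] (h : ZMod N → M) :
    ∑ n ∈ range N, h n = ∑ x, h x :=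
  sum_nbij' (↑) ZMod.val (by simp) (by simp [ZMod.val_lt])
    (fun n hn ↦ ZMod.val_cast_of_lt (mem_range.1 hn)) (fun x _ ↦ ZMod.natCast_zmod_val x)
    (fun _ _ ↦ rfl)

theorem expect_eq_inv_mul_sum (f : ZMod N → ℝ) : _root_.expect N f = (N : ℝ)⁻¹ * ∑ x, f x := by
  rw [_root_.expect, sum_range_eq_sum_zmod f]

theorem lambda3_eq_inv_sq_mul_sum (f : ZMod N → ℝ) :
    lambda3 N f = ((N : ℝ) ^ 2)⁻¹ * ∑ x, ∑ z, f x * f (2 * z - x) * f z := by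
  rw [lambda3, sum_range_eq_sum_zmod fun n ↦ ∑ d ∈ range N, f n * f (n + d) * f (n + 2 * d)]
  congr 1
  refine sum_congr rfl fun x _ ↦ ?_
  rw [sum_range_eq_sum_zmod fun d ↦ f x * f (x + d) * f (x + 2 * d)]
  refine sum_equiv (Equiv.addLeft x) (by simp) fun d _ ↦ ?_
  rw [Equiv.coe_addLeft, show 2 * (x + d) - x = x + 2 * d by ring]
  ring

theorem ZMod.sum_stdAddChar_mul (t : ZMod N) :
    ∑ j : ZMod N, ZMod.stdAddChar (j * t) = if t = 0 then (N : ℂ) else 0 := by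
  simpa using AddChar.sum_mulShift t (ZMod.isPrimitive_stdAddChar N)

theorem ZMod.sum_norm_dft_sq (Φ : ZMod N → ℂ) :
    ∑ r, ‖𝓕 Φ r‖ ^ 2 = N * ∑ j, ‖Φ j‖ ^ 2 := by
  have conj_dft_dft (j : ZMod N) : (starRingEnd ℂ) (𝓕 (𝓕 Φ) (-j))
      = ∑ r, ZMod.stdAddChar (-(j * r)) * (starRingEnd ℂ) (𝓕 Φ r) := by
    simp only [ZMod.dft_apply, smul_eq_mul, map_sum, map_mul, ← AddChar.map_neg_eq_conj]
    exact sum_congr rfl fun r _ ↦ by ring_nf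
  have key : ∑ r, 𝓕 Φ r * (starRingEnd ℂ) (𝓕 Φ r) = N * ∑ j, Φ j * (starRingEnd ℂ) (Φ j) := by
    calc ∑ r, 𝓕 Φ r * (starRingEnd ℂ) (𝓕 Φ r)
        = ∑ j, Φ j * (starRingEnd ℂ) (𝓕 (𝓕 Φ) (-j)) := by
          conv_lhs => enter [2, r, 1]; rw [ZMod.dft_apply]
          simp only [conj_dft_dft, smul_eq_mul, sum_mul, mul_sum]
          rw [sum_comm]
          exact sum_congr rfl fun j _ ↦ sum_congr rfl fun r _ ↦ by ring
      _ = N * ∑ j, Φ j * (starRingEnd ℂ) (Φ j) := by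
          simp only [ZMod.dft_dft, neg_neg, smul_eq_mul, map_mul, Complex.conj_natCast, mul_sum]
          exact sum_congr rfl fun j _ ↦ by ring
  simp only [Complex.mul_conj, Complex.normSq_eq_norm_sq] at key
  exact_mod_cast key

theorem ZMod.sum_dft_sq_mul_dft_neg_two_mul (Φ : ZMod N → ℂ) :
    ∑ r, 𝓕 Φ r ^ 2 * 𝓕 Φ (-(2 * r)) = N * ∑ x, ∑ z, Φ x * Φ (2 * z - x) * Φ z := by
  have expand (r : ZMod N) : 𝓕 Φ r ^ 2 * 𝓕 Φ (-(2 * r))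
      = ∑ x, ∑ y, ∑ z, Φ x * Φ y * Φ z * ZMod.stdAddChar (r * (2 * z - x - y)) := by
    simp only [ZMod.dft_apply, smul_eq_mul, sq]
    rw [sum_mul_sum, sum_mul]
    refine sum_congr rfl fun x _ ↦ ?_
    rw [sum_mul]
    refine sum_congr rfl fun y _ ↦ ?_
    rw [mul_sum]
    refine sum_congr rfl fun z _ ↦ ?_
    rw [show r * (2 * z - x - y) = -(x * r) + -(y * r) + -(z * -(2 * r)) by ring,
      AddChar.map_add_eq_mul, AddChar.map_add_eq_mul]
    ring
  calc ∑ r, 𝓕 Φ r ^ 2 * 𝓕 Φ (-(2 * r))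
      = ∑ x, ∑ z, ∑ y, Φ x * Φ y * Φ z * ∑ r, ZMod.stdAddChar (r * (2 * z - x - y)) := by
        simp only [expand, mul_sum]
        rw [sum_comm]
        refine sum_congr rfl fun x _ ↦ ?_
        rw [sum_comm, sum_congr rfl fun y _ ↦ sum_comm]
        exact sum_comm
    _ = N * ∑ x, ∑ z, Φ x * Φ (2 * z - x) * Φ z := by
        simp only [ZMod.sum_stdAddChar_mul, mul_ite, mul_zero, mul_sum]
        refine sum_congr rfl fun x _ ↦ sum_congr rfl fun z _ ↦ ?_
        rw [sum_eq_single (2 * z - x)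
          (fun y _ hy ↦ if_neg (by contrapose! hy; linear_combination -hy)) (by simp),
          if_pos (by ring)]
        ring

theorem ZMod.dft_one_sub_apply (Φ : ZMod N → ℂ) {r : ZMod N} (hr : r ≠ 0) :
    𝓕 (fun n ↦ 1 - Φ n) r = -𝓕 Φ r := by
  have hconst : 𝓕 (fun _ ↦ (1 : ℂ)) r = 0 := by
    simp [ZMod.dft_apply, ← mul_neg, ZMod.sum_stdAddChar_mul, hr]
  rw [show (fun n ↦ 1 - Φ n) = (fun _ ↦ (1 : ℂ)) - Φ from rfl, map_sub, Pi.sub_apply, hconst,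
    zero_sub]

end ZModN

theorem Complex.re_pow_eq_eval_T {z : ℂ} (hz : ‖z‖ = 1) (n : ℕ) :
    (z ^ n).re = (T ℝ n).eval z.re := by
  have hsq : z ^ 2 = 2 * z.re * z - 1 := by
    have h := Complex.mul_conj z
    rw [Complex.normSq_eq_norm_sq, hz] at h
    rw [Complex.re_eq_add_conj]
    push_cast at h
    linear_combination -h
  induction n using Nat.strong_induction_on with
  | _ n ih =>
    match n with
    | 0 => simp
    | 1 => simp
    | n + 2 =>
      have ih₁ := ih (n + 1) (by omega)
      push_cast at ih₁
      rw [show z ^ (n + 2) = 2 * z.re * z ^ (n + 1) - z ^ n by linear_combination z ^ n * hsq]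
      push_cast
      simp [T_add_two, Complex.mul_re, ← ih n (by omega), ih₁]

theorem sum_eval_T_re_eq_card_mul {ι : Type*} [Fintype ι] {d : ℕ} {w : ι → ℂ}
    (hw : ∀ i, ‖w i‖ = 1) (hpow : ∀ k, 0 < k → k ≤ d → ∑ i, w i ^ k = 0) (c : Fin (d + 1) → ℝ) :
    ∑ i, (∑ k, C (c k) * T ℝ k).eval (w i).re = Fintype.card ι * c 0 := by
  have hre (k : Fin (d + 1)) (hk : k ≠ 0) : ∑ i, (T ℝ (k : ℕ)).eval (w i).re = 0 := by
    simp only [← Complex.re_pow_eq_eval_T (hw _), ← Complex.re_sum,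
      hpow k (Nat.pos_of_ne_zero (Fin.val_ne_zero_iff.2 hk)) (Nat.lt_succ_iff.1 k.2),
      Complex.zero_re]
  simp only [eval_finsetSum, eval_mul, eval_C]
  rw [sum_comm, Fin.sum_univ_succ]
  simp only [← mul_sum, fun k : Fin d ↦ hre k.succ (Fin.succ_ne_zero k), mul_zero, sum_const_zero,
    add_zero]
  simp [mul_comm]

-- `majorant` dominates `max 0 (x - 1/2)` on `[-1, 1]`. Its constant coefficient `8265/65536` is the
-- mean of `majorant (cos θ)`, not far above the mean `≈ 0.109` of `max 0 (cos θ - 1/2)`.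
noncomputable def majorantCoeff : Fin 7 → ℝ :=
  ![8265/65536, 6409/32768, 18065/131072, 4517/65536, 903/65536, -903/65536, -2065/131072]

noncomputable def majorant : ℝ[X] := ∑ k, C (majorantCoeff k) * T ℝ k

theorem eval_majorant (x : ℝ) : majorant.eval x = 73/4096 - 41/512 * x - 121/1024 * x ^ 2
    + 1129/2048 * x ^ 3 + 3549/4096 * x ^ 4 - 903/4096 * x ^ 5 - 2065/4096 * x ^ 6 := by
  have h (n : ℤ) := congrArg (eval x) (T_add_two ℝ n)
  simp only [eval_sub, eval_mul, eval_X, eval_ofNat] at h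
  have h2 := h 0; have h3 := h 1; have h4 := h 2; have h5 := h 3; have h6 := h 4
  norm_num [T_zero, T_one] at h2 h3 h4 h5 h6
  simp [majorant, majorantCoeff, Fin.sum_univ_succ, h2, h3, h4, h5, h6]
  ring

theorem eval_majorant_nonneg {x : ℝ} (hx : x ∈ Set.Icc (-1) 1) : 0 ≤ majorant.eval x := by
  obtain ⟨h1, h2⟩ := hx
  have hI : 0 ≤ (1 - x) * (1 + x) := mul_nonneg (by linarith) (by linarith)
  rw [eval_majorant]
  nlinarith [mul_nonneg hI (sq_nonneg ((x - 6/25) * (x + 3/5))),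
    mul_nonneg hI (sq_nonneg (x - 6/25)), mul_nonneg hI (sq_nonneg (x + 3/5)),
    mul_nonneg hI (sq_nonneg x), sq_nonneg ((x - 6/25) * (x + 3/5)), sq_nonneg (x - 6/25),
    sq_nonneg (x + 3/5)]

theorem sub_half_le_eval_majorant {x : ℝ} (hx : x ∈ Set.Icc (-1) 1) :
    x - 1/2 ≤ majorant.eval x := by
  obtain ⟨h1, h2⟩ := hx
  have hI : 0 ≤ (1 - x) * (1 + x) := mul_nonneg (by linarith) (by linarith)
  rw [eval_majorant]
  nlinarith [mul_nonneg hI (sq_nonneg ((x - 71/100) * (x - 71/100))),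
    mul_nonneg hI (sq_nonneg (x - 71/100)), mul_nonneg hI (sq_nonneg x),
    sq_nonneg ((x - 71/100) * (x - 1)), sq_nonneg (x - 71/100),
    sq_nonneg ((x - 71/100) * (x - 71/100) * (x - 1))]

theorem mul_le_half_add_eval_majorant {g x : ℝ} (hg : g ∈ Set.Icc 0 1)
    (hx : x ∈ Set.Icc (-1) 1) : g * x ≤ g / 2 + majorant.eval x := by
  obtain ⟨hg0, hg1⟩ := hg
  rcases le_or_gt x (1/2) with h | h
  · nlinarith [eval_majorant_nonneg hx]
  · nlinarith [sub_half_le_eval_majorant hx]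

theorem re_sum_mul_le {ι : Type*} [Fintype ι] {g : ι → ℝ} (hg : ∀ i, g i ∈ Set.Icc 0 1)
    {w : ι → ℂ} (hw : ∀ i, ‖w i‖ = 1) (hpow : ∀ k, 0 < k → k ≤ 6 → ∑ i, w i ^ k = 0) :
    (∑ i, g i * w i).re ≤ (∑ i, g i) / 2 + 8265/65536 * Fintype.card ι := by
  have hre (i : ι) : (w i).re ∈ Set.Icc (-1) 1 := by
    simpa [← abs_le, hw i] using Complex.abs_re_le_norm (w i)
  calc (∑ i, g i * w i).re = ∑ i, g i * (w i).re := by simp [Complex.re_sum]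
    _ ≤ ∑ i, (g i / 2 + majorant.eval (w i).re) :=
        sum_le_sum fun i _ ↦ mul_le_half_add_eval_majorant (hg i) (hre i)
    _ = (∑ i, g i) / 2 + 8265/65536 * Fintype.card ι := by
        rw [sum_add_distrib, ← sum_div, majorant, sum_eval_T_re_eq_card_mul hw hpow]
        simp [majorantCoeff, mul_comm]

theorem ZMod.norm_dft_le_half_sum_add {p : ℕ} [Fact p.Prime] (hp : 6 < p) {g : ZMod p → ℝ}
    (hg : ∀ n, g n ∈ Set.Icc 0 1) {r : ZMod p} (hr : r ≠ 0) :
    ‖𝓕 (fun n ↦ (g n : ℂ)) r‖ ≤ (∑ n, g n) / 2 + 8265/65536 * p := by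
  set z := 𝓕 (fun n ↦ (g n : ℂ)) r
  set u := Complex.exp (-(z.arg : ℂ) * Complex.I)
  have hu : ‖u‖ = 1 := by simp [u, ← Complex.ofReal_neg, Complex.norm_exp_ofReal_mul_I]
  have huz : u * z = ‖z‖ := by
    calc u * z = u * (‖z‖ * Complex.exp (z.arg * Complex.I)) := by
          rw [Complex.norm_mul_exp_arg_mul_I]
      _ = ‖z‖ := by
          rw [mul_left_comm, ← Complex.exp_add, neg_mul, neg_add_cancel, Complex.exp_zero, mul_one]
  have hpow (k : ℕ) (hk : 0 < k) (hkp : k ≤ 6) :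
      ∑ n : ZMod p, (u * ZMod.stdAddChar (-(n * r))) ^ k = 0 := by
    have hk' : (k : ZMod p) ≠ 0 := by
      rw [Ne, ZMod.natCast_eq_zero_iff]
      exact fun h ↦ absurd (Nat.le_of_dvd hk h) (by omega)
    simp only [mul_pow, ← mul_sum, ← AddChar.map_nsmul_eq_pow, nsmul_eq_mul,
      show ∀ n : ZMod p, (k : ZMod p) * -(n * r) = n * -(k * r) from fun n ↦ by ring,
      ZMod.sum_stdAddChar_mul, neg_eq_zero, mul_eq_zero, hk', hr, or_self, if_false, mul_zero]
  have h := re_sum_mul_le hg (fun n ↦ by simp [hu]) hpow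
  rw [ZMod.card] at h
  calc ‖z‖ = (u * z).re := by simp [huz]
    _ ≤ _ := by
      convert h using 3
      simp only [z, ZMod.dft_apply, smul_eq_mul, mul_sum]
      exact sum_congr rfl fun n _ ↦ by ring

theorem le_cube_sub_mul_of_two_thirds_le {s : ℝ} (hs : 2/3 ≤ s) :
    2305/10000 ≤ s ^ 3 - ((1 - s) / 2 + 8265/65536) * (s - s ^ 2) := by
  have ht := sub_nonneg.2 hs
  nlinarith [mul_nonneg ht ht, mul_nonneg (mul_nonneg ht ht) ht]

section Prime

variable {p : ℕ} [Fact p.Prime]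

theorem cube_sub_mul_le_mul_sum_three_ap (hp : p ≠ 2) {f : ZMod p → ℝ}
    (hf : ∀ n, f n ∈ Set.Icc 0 1) {B : ℝ} (hB : ∀ r ≠ 0, ‖𝓕 (fun n ↦ (f n : ℂ)) r‖ ≤ B) :
    (∑ n, f n) ^ 3 - B * (p * ∑ n, f n - (∑ n, f n) ^ 2)
      ≤ p * ∑ x, ∑ z, f x * f (2 * z - x) * f z := by
  have h3ap := congrArg Complex.re (ZMod.sum_dft_sq_mul_dft_neg_two_mul fun n ↦ (f n : ℂ))
  have hpars := ZMod.sum_norm_dft_sq fun n ↦ (f n : ℂ)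
  rw [← add_sum_erase _ _ (mem_univ 0), Complex.add_re, Complex.re_sum] at h3ap
  rw [← add_sum_erase _ _ (mem_univ 0)] at hpars
  set F := 𝓕 (fun n ↦ (f n : ℂ))
  set S := ∑ n, f n
  have hF0 : F 0 = S := by simp [F, S, ZMod.dft_apply_zero]
  have h2 : (2 : ZMod p) ≠ 0 := Ring.two_ne_zero (by rwa [ZMod.ringChar_zmod_n])
  have hB0 : 0 ≤ B := (norm_nonneg _).trans (hB 1 one_ne_zero)
  have hsplit : p * ∑ x, ∑ z, f x * f (2 * z - x) * f z
      = S ^ 3 + ∑ r ∈ univ.erase 0, (F r ^ 2 * F (-(2 * r))).re := by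
    simp only [mul_zero, neg_zero, hF0] at h3ap
    norm_cast at h3ap
    rw [← h3ap]
    ring
  have hterm (r) (hr : r ∈ univ.erase (0 : ZMod p)) :
      -(B * ‖F r‖ ^ 2) ≤ (F r ^ 2 * F (-(2 * r))).re := by
    calc -(B * ‖F r‖ ^ 2) ≤ -‖F r ^ 2 * F (-(2 * r))‖ := by
          rw [norm_mul, norm_pow, mul_comm]
          gcongr
          exact hB _ (neg_ne_zero.2 (mul_ne_zero h2 (ne_of_mem_erase hr)))
      _ ≤ _ := neg_le_of_abs_le (Complex.abs_re_le_norm _)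
  have hparseval : ∑ r ∈ univ.erase (0 : ZMod p), ‖F r‖ ^ 2 ≤ p * S - S ^ 2 := by
    have hsq : ∑ n, ‖(f n : ℂ)‖ ^ 2 ≤ S := sum_le_sum fun n _ ↦ by
      rw [Complex.norm_real, Real.norm_eq_abs, sq_abs]
      nlinarith [(hf n).1, (hf n).2]
    rw [hF0, Complex.norm_real, Real.norm_eq_abs, sq_abs] at hpars
    nlinarith [hsq]
  calc S ^ 3 - B * (p * S - S ^ 2) ≤ S ^ 3 + ∑ r ∈ univ.erase 0, -(B * ‖F r‖ ^ 2) := by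
        rw [sum_neg_distrib, ← mul_sum]
        nlinarith [mul_le_mul_of_nonneg_left hparseval hB0]
    _ ≤ _ := by rw [hsplit]; gcongr with r hr; exact hterm r hr

theorem lambda3_ge_of_two_thirds_le_expect (hp : 6 < p) {f : ZMod p → ℝ}
    (hf : ∀ n, f n ∈ Set.Icc 0 1) (hmean : 2/3 ≤ _root_.expect p f) : 2305/10000 ≤ lambda3 p f := by
  set S := ∑ n, f n
  have hp0 : (0 : ℝ) < p := by exact_mod_cast (Fact.out : p.Prime).pos
  have hS : 2/3 ≤ S / p := by rwa [expect_eq_inv_mul_sum, inv_mul_eq_div] at hmean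
  have hB (r : ZMod p) (hr : r ≠ 0) :
      ‖𝓕 (fun n ↦ (f n : ℂ)) r‖ ≤ (p - S) / 2 + 8265/65536 * p := by
    have h := ZMod.norm_dft_le_half_sum_add hp (g := fun n ↦ 1 - f n)
      (fun n ↦ ⟨sub_nonneg.2 (hf n).2, sub_le_self _ (hf n).1⟩) hr
    push_cast at h
    rwa [ZMod.dft_one_sub_apply _ hr, norm_neg, sum_sub_distrib, sum_const, card_univ,
      ZMod.card, nsmul_one] at h
  have hcount := cube_sub_mul_le_mul_sum_three_ap (by omega) hf hB
  have hcube : 2305/10000 * p ^ 3 ≤ p * ∑ x, ∑ z, f x * f (2 * z - x) * f z :=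
    calc 2305/10000 * p ^ 3
        ≤ ((S / p) ^ 3 - ((1 - S / p) / 2 + 8265/65536) * (S / p - (S / p) ^ 2)) * p ^ 3 := by
          gcongr
          exact le_cube_sub_mul_of_two_thirds_le hS
      _ = _ := by field_simp; ring
      _ ≤ _ := hcount
  rw [lambda3_eq_inv_sq_mul_sum, le_inv_mul_iff₀ (by positivity)]
  nlinarith

theorem rho_two_thirds_ge (hp : 6 < p) : 2305/10000 ≤ rho (2/3) p := by
  refine le_csInf ⟨_, fun _ ↦ 1, fun _ ↦ ⟨zero_le_one, le_rfl⟩, ?_, rfl⟩ ?_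
  · have : (p : ℝ) ≠ 0 := by exact_mod_cast (Fact.out : p.Prime).ne_zero
    simp [expect_eq_inv_mul_sum, this]
    norm_num
  · rintro _ ⟨f, hf, hmean, rfl⟩
    exact lambda3_ge_of_two_thirds_le_expect hp hf hmean

end Prime

theorem rho_two_thirds_gt_on_primes_one_mod_three :
    ∃ p₀ : ℕ, ∀ p : ℕ, p.Prime → p₀ < p → p % 3 = 1 →
      rho (2 / 3) p > 0.23 ∧ rho (2 / 3) p > 2 / 9 := by
  refine ⟨6, fun p hp hp6 _ ↦ ?_⟩
  have := Fact.mk hp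
  have h := rho_two_thirds_ge hp6
  constructor <;> norm_num at h ⊢ <;> linarith
end

section
/- For every υ ∈ (0,1] and every ε > 0, there exists N₀ such that for every integer N ≥ N₀ and every function f : ℤ/Nℤ → [0,1] with 𝔼(f) ≥ υ, there exists a subset S ⊆ ℤ/Nℤ with |S| ≥ υN and Λ₃(1_S; N) < Λ₃(f; N) + ε. -/
open Finset

section Aux
variable {N : ℕ} [NeZero N]

theorem sum_range_zmod (h : ZMod N → ℝ) :
    ∑ n ∈ range N, h n = ∑ z : ZMod N, h z := by
  refine Finset.sum_bij' (fun n _ => (n : ZMod N)) (fun z _ => z.val) ?_ ?_ ?_ ?_ ?_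
  · intros; exact mem_univ _
  · intro z _; exact mem_range.2 (ZMod.val_lt z)
  · intro n hn; exact ZMod.val_natCast_of_lt (mem_range.1 hn)
  · intro z _; exact ZMod.natCast_zmod_val z
  · intros; rfl

theorem sum_range_zmod2 (h : ZMod N → ZMod N → ℝ) :
    ∑ n ∈ range N, ∑ d ∈ range N, h n d = ∑ z : ZMod N, ∑ w : ZMod N, h z w :=
  calc ∑ n ∈ range N, ∑ d ∈ range N, h n d
      = ∑ n ∈ range N, ∑ w : ZMod N, h n w :=
        Finset.sum_congr rfl (fun n _ => sum_range_zmod _)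
    _ = ∑ z : ZMod N, ∑ w : ZMod N, h z w := sum_range_zmod (fun z => ∑ w : ZMod N, h z w)

theorem card_two_mul_eq (c : ZMod N) :
    (univ.filter (fun d : ZMod N => 2 * d = c)).card ≤ 2 := by
  classical
  have hsub : (univ.filter (fun d : ZMod N => 2 * d = c)) ⊆
      {(↑(c.val / 2) : ZMod N), (↑((c.val + N) / 2) : ZMod N)} := by
    intro d hd
    obtain ⟨-, h⟩ := mem_filter.mp hd
    have hcast : ((2 * d.val : ℕ) : ZMod N) = ((c.val : ℕ) : ZMod N) := by
      push_cast [ZMod.natCast_zmod_val]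
      exact h
    have hv : (2 * d.val) % N = c.val % N := (ZMod.natCast_eq_natCast_iff _ _ _).mp hcast
    have hdlt := ZMod.val_lt d
    have hclt := ZMod.val_lt c
    rw [Nat.mod_eq_of_lt hclt] at hv
    rcases Nat.lt_or_ge (2 * d.val) N with h2 | h2
    · rw [Nat.mod_eq_of_lt h2] at hv
      have : d = ((c.val / 2 : ℕ) : ZMod N) := by
        rw [← ZMod.natCast_zmod_val d]; congr 1; omega
      simp [this]
    · rw [Nat.mod_eq_sub_mod h2, Nat.mod_eq_of_lt (by omega)] at hv
      have : d = (((c.val + N) / 2 : ℕ) : ZMod N) := by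
        rw [← ZMod.natCast_zmod_val d]; congr 1; omega
      simp [this]
  calc (univ.filter (fun d : ZMod N => 2 * d = c)).card
      ≤ ({(↑(c.val / 2) : ZMod N), (↑((c.val + N) / 2) : ZMod N)} : Finset (ZMod N)).card :=
        Finset.card_le_card hsub
    _ ≤ 2 := Finset.card_insert_le _ _ |>.trans (by simp)
noncomputable def Lfull (N : ℕ) [NeZero N] (x : ZMod N → ℝ) : ℝ :=
  ∑ n : ZMod N, ∑ d : ZMod N, x n * x (n + d) * x (n + 2 * d)

noncomputable def Lnd (N : ℕ) [NeZero N] (x : ZMod N → ℝ) : ℝ :=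
  ∑ n : ZMod N, ∑ d : ZMod N,
    if 2 * d ≠ 0 then x n * x (n + d) * x (n + 2 * d) else 0

theorem lambda3_eq (x : ZMod N → ℝ) : lambda3 N x = ((N : ℝ) ^ 2)⁻¹ * Lfull N x := by
  rw [lambda3, Lfull]
  congr 1
  refine Eq.trans ?_ (sum_range_zmod2 (fun z w => x z * x (z + w) * x (z + 2 * w)))
  refine Finset.sum_congr rfl fun n _ => Finset.sum_congr rfl fun d _ => ?_
  push_cast
  ring_nf

theorem Lnd_le_Lfull (x : ZMod N → ℝ) (hx : ∀ i, 0 ≤ x i) : Lnd N x ≤ Lfull N x := by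
  refine Finset.sum_le_sum fun n _ => Finset.sum_le_sum fun d _ => ?_
  split_ifs with h
  · exact le_rfl
  · exact mul_nonneg (mul_nonneg (hx _) (hx _)) (hx _)

theorem Lfull_le_Lnd (x : ZMod N → ℝ) (hx : ∀ i, x i ∈ Set.Icc (0:ℝ) 1) :
    Lfull N x ≤ Lnd N x + 2 * N := by
  have key : ∀ n d : ZMod N, x n * x (n + d) * x (n + 2 * d) ≤
      (if 2 * d ≠ 0 then x n * x (n + d) * x (n + 2 * d) else 0)
        + (if 2 * d = 0 then (1:ℝ) else 0) := by
    intro n d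
    by_cases hd : 2 * d = 0
    · simp only [hd, ne_eq, not_true_eq_false, if_false, if_pos, zero_add]
      exact mul_le_one₀ (mul_le_one₀ (hx n).2 (hx _).1 (hx _).2) (hx _).1 (hx _).2
    · simp [hd]
  calc Lfull N x ≤ ∑ n : ZMod N, ∑ d : ZMod N,
        ((if 2 * d ≠ 0 then x n * x (n + d) * x (n + 2 * d) else 0)
          + (if 2 * d = 0 then (1:ℝ) else 0)) :=
        Finset.sum_le_sum fun n _ => Finset.sum_le_sum fun d _ => key n d
    _ = Lnd N x + ∑ n : ZMod N, ∑ d : ZMod N, (if 2 * d = 0 then (1:ℝ) else 0) := by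
        rw [Lnd, ← Finset.sum_add_distrib]
        exact Finset.sum_congr rfl fun n _ => Finset.sum_add_distrib
    _ ≤ Lnd N x + 2 * N := by
        have h1 : (∑ d : ZMod N, if 2 * d = 0 then (1:ℝ) else 0) ≤ 2 := by
          rw [Finset.sum_boole]
          exact_mod_cast card_two_mul_eq (0 : ZMod N)
        have h2 : (∑ _n : ZMod N, ∑ d : ZMod N, if 2 * d = 0 then (1:ℝ) else 0)
            = N * ∑ d : ZMod N, (if 2 * d = 0 then (1:ℝ) else 0) := by
          rw [Finset.sum_const, Finset.card_univ, ZMod.card, nsmul_eq_mul]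
        rw [h2]
        have hN : (0:ℝ) ≤ N := Nat.cast_nonneg N
        nlinarith [h1, hN]
noncomputable def uv (p q i : ZMod N) : ℝ :=
  (if i = p then 1 else 0) - (if i = q then 1 else 0)

omit [NeZero N] in
theorem uv_mul_nonpos {p q i j : ZMod N} (hij : i ≠ j) : uv p q i * uv p q j ≤ 0 := by
  unfold uv; split_ifs <;> simp_all

omit [NeZero N] in
theorem uv_triple {p q a b c : ZMod N} (hab : a ≠ b) (hac : a ≠ c) (hbc : b ≠ c) :
    uv p q a * uv p q b * uv p q c = 0 := by
  unfold uv; split_ifs <;> simp_all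

omit [NeZero N] in
theorem ap_distinct {d : ZMod N} (hd : 2 * d ≠ 0) (n : ZMod N) :
    n ≠ n + d ∧ n ≠ n + 2 * d ∧ n + d ≠ n + 2 * d := by
  have hd0 : d ≠ 0 := by rintro rfl; simp at hd
  refine ⟨?_, ?_, ?_⟩
  · intro h; exact hd0 (by linear_combination -h)
  · intro h; exact hd (by linear_combination -h)
  · intro h; exact hd0 (by linear_combination -h)

theorem quad (x : ZMod N → ℝ) (hx : ∀ i, 0 ≤ x i) (p q : ZMod N) :
    ∃ B C : ℝ, C ≤ 0 ∧ ∀ t : ℝ,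
      Lnd N (fun i => x i + t * uv p q i) = Lnd N x + B * t + C * t ^ 2 := by
  refine ⟨∑ n : ZMod N, ∑ d : ZMod N, (if 2 * d ≠ 0 then
      (uv p q n * x (n + d) * x (n + 2 * d) + x n * uv p q (n + d) * x (n + 2 * d)
        + x n * x (n + d) * uv p q (n + 2 * d)) else 0),
    ∑ n : ZMod N, ∑ d : ZMod N, (if 2 * d ≠ 0 then
      (uv p q n * uv p q (n + d) * x (n + 2 * d) + uv p q n * x (n + d) * uv p q (n + 2 * d)
        + x n * uv p q (n + d) * uv p q (n + 2 * d)) else 0),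
    ?_, ?_⟩
  · refine Finset.sum_nonpos fun n _ => Finset.sum_nonpos fun d _ => ?_
    split_ifs with hd
    · obtain ⟨h1, h2, h3⟩ := ap_distinct hd n
      have e1 := uv_mul_nonpos (p := p) (q := q) h1
      have e2 := uv_mul_nonpos (p := p) (q := q) h2
      have e3 := uv_mul_nonpos (p := p) (q := q) h3
      nlinarith [hx n, hx (n + d), hx (n + 2 * d)]
    · exact le_rfl
  · intro t
    have key : ∀ n d : ZMod N,
        (if 2 * d ≠ 0 then
            (x n + t * uv p q n) * (x (n + d) + t * uv p q (n + d))
              * (x (n + 2 * d) + t * uv p q (n + 2 * d)) else 0)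
        = (if 2 * d ≠ 0 then x n * x (n + d) * x (n + 2 * d) else 0)
          + (if 2 * d ≠ 0 then
              (uv p q n * x (n + d) * x (n + 2 * d) + x n * uv p q (n + d) * x (n + 2 * d)
                + x n * x (n + d) * uv p q (n + 2 * d)) else 0) * t
          + (if 2 * d ≠ 0 then
              (uv p q n * uv p q (n + d) * x (n + 2 * d)
                + uv p q n * x (n + d) * uv p q (n + 2 * d)
                + x n * uv p q (n + d) * uv p q (n + 2 * d)) else 0) * t ^ 2 := by
      intro n d
      split_ifs with hd
      · obtain ⟨h1, h2, h3⟩ := ap_distinct hd n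
        have h0 := uv_triple (p := p) (q := q) h1 h2 h3
        linear_combination t ^ 3 * h0
      · ring
    calc Lnd N (fun i => x i + t * uv p q i)
        = ∑ n : ZMod N, ∑ d : ZMod N,
            ((if 2 * d ≠ 0 then x n * x (n + d) * x (n + 2 * d) else 0)
              + (if 2 * d ≠ 0 then
                  (uv p q n * x (n + d) * x (n + 2 * d) + x n * uv p q (n + d) * x (n + 2 * d)
                    + x n * x (n + d) * uv p q (n + 2 * d)) else 0) * t
              + (if 2 * d ≠ 0 then
                  (uv p q n * uv p q (n + d) * x (n + 2 * d)
                    + uv p q n * x (n + d) * uv p q (n + 2 * d)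
                    + x n * uv p q (n + d) * uv p q (n + 2 * d)) else 0) * t ^ 2) :=
          Finset.sum_congr rfl fun n _ => Finset.sum_congr rfl fun d _ => key n d
      _ = _ := by
          simp only [Finset.sum_add_distrib, ← Finset.sum_mul]
          rw [Lnd]

theorem pick_endpoint (B C t₁ t₂ : ℝ) (hC : C ≤ 0) (h1 : t₁ ≤ 0) (h2 : 0 ≤ t₂) :
    B * t₁ + C * t₁ ^ 2 ≤ 0 ∨ B * t₂ + C * t₂ ^ 2 ≤ 0 := by
  rcases le_total 0 B with hB | hB
  · left; nlinarith
  · right; nlinarith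

noncomputable def frac (x : ZMod N → ℝ) : Finset (ZMod N) :=
  univ.filter (fun i => x i ≠ 0 ∧ x i ≠ 1)

theorem move (x : ZMod N → ℝ) (hx : ∀ i, x i ∈ Set.Icc (0:ℝ) 1) (p q : ZMod N)
    (hpq : p ≠ q) (hp : p ∈ frac x) (hq : q ∈ frac x) :
    ∃ y : ZMod N → ℝ, (∀ i, y i ∈ Set.Icc (0:ℝ) 1) ∧ (frac y).card < (frac x).card ∧
      (∑ i, y i) = ∑ i, x i ∧ Lnd N y ≤ Lnd N x := by
  obtain ⟨-, hp0, hp1⟩ := mem_filter.mp hp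
  obtain ⟨-, hq0, hq1⟩ := mem_filter.mp hq
  obtain ⟨hxp0, hxp1⟩ := hx p
  obtain ⟨hxq0, hxq1⟩ := hx q
  set t₁ := max (-(x p)) (x q - 1) with ht₁def
  set t₂ := min (1 - x p) (x q) with ht₂def
  have ht1 : t₁ ≤ 0 := max_le (by linarith) (by linarith)
  have ht2 : 0 ≤ t₂ := le_min (by linarith) (by linarith)
  obtain ⟨B, C, hC, hquad⟩ := quad x (fun i => (hx i).1) p q
  have hex : ∃ t : ℝ, t₁ ≤ t ∧ t ≤ t₂ ∧ B * t + C * t ^ 2 ≤ 0 ∧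
      (x p + t = 0 ∨ x p + t = 1 ∨ x q - t = 0 ∨ x q - t = 1) := by
    rcases pick_endpoint B C t₁ t₂ hC ht1 ht2 with h | h
    · refine ⟨t₁, le_rfl, le_trans ht1 ht2, h, ?_⟩
      rcases max_choice (-(x p)) (x q - 1) with he | he
      · left; rw [ht₁def, he]; ring
      · right; right; right; rw [ht₁def, he]; ring
    · refine ⟨t₂, le_trans ht1 ht2, le_rfl, h, ?_⟩
      rcases min_choice (1 - x p) (x q) with he | he
      · right; left; rw [ht₂def, he]; ring
      · right; right; left; rw [ht₂def, he]; ring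
  obtain ⟨t, htl, htr, hBC, hbd⟩ := hex
  have hup : uv p q p = 1 := by simp [uv, hpq]
  have huq : uv p q q = -1 := by simp [uv, Ne.symm hpq]
  have huo : ∀ i, i ≠ p → i ≠ q → uv p q i = 0 := by
    intro i h1 h2; simp [uv, h1, h2]
  have htp1 : -(x p) ≤ t := le_trans (le_max_left _ _) htl
  have htp2 : t ≤ 1 - x p := le_trans htr (min_le_left _ _)
  have htq1 : x q - 1 ≤ t := le_trans (le_max_right _ _) htl
  have htq2 : t ≤ x q := le_trans htr (min_le_right _ _)
  refine ⟨fun i => x i + t * uv p q i, ?_, ?_, ?_, ?_⟩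
  · intro i
    show x i + t * uv p q i ∈ Set.Icc 0 1
    by_cases hip : i = p
    · subst hip; rw [hup]; constructor <;> simp <;> linarith
    · by_cases hiq : i = q
      · subst hiq; rw [huq]; constructor <;> simp <;> linarith
      · rw [huo i hip hiq]; simpa using hx i
  · have hsub : frac (fun i => x i + t * uv p q i) ⊆ frac x := by
      intro i hi
      by_cases hip : i = p
      · subst hip; exact hp
      · by_cases hiq : i = q
        · subst hiq; exact hq
        · obtain ⟨-, h1, h2⟩ := mem_filter.mp hi
          replace h1 : x i + t * uv p q i ≠ 0 := h1
          replace h2 : x i + t * uv p q i ≠ 1 := h2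
          rw [huo i hip hiq] at h1 h2
          simp only [mul_zero, add_zero] at h1 h2
          exact mem_filter.mpr ⟨mem_univ _, h1, h2⟩
    have hexr : ∃ r, r ∈ frac x ∧ r ∉ frac (fun i => x i + t * uv p q i) := by
      rcases hbd with h | h | h | h
      · exact ⟨p, hp, fun hmem => (mem_filter.mp hmem).2.1
          (by show x p + t * uv p q p = 0; rw [hup]; simpa using h)⟩
      · exact ⟨p, hp, fun hmem => (mem_filter.mp hmem).2.2
          (by show x p + t * uv p q p = 1; rw [hup]; simpa using h)⟩
      · exact ⟨q, hq, fun hmem => (mem_filter.mp hmem).2.1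
          (by show x q + t * uv p q q = 0; rw [huq]; linarith)⟩
      · exact ⟨q, hq, fun hmem => (mem_filter.mp hmem).2.2
          (by show x q + t * uv p q q = 1; rw [huq]; linarith)⟩
    obtain ⟨r, hr1, hr2⟩ := hexr
    exact Finset.card_lt_card ((Finset.ssubset_iff_of_subset hsub).mpr ⟨r, hr1, hr2⟩)
  · rw [Finset.sum_add_distrib, ← Finset.mul_sum]
    have : ∑ i : ZMod N, uv p q i = 0 := by
      unfold uv
      rw [Finset.sum_sub_distrib]
      simp [Finset.sum_ite_eq']
    rw [this, mul_zero, add_zero]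
  · rw [hquad t]; linarith

theorem bump (x : ZMod N → ℝ) (hx : ∀ i, x i ∈ Set.Icc (0:ℝ) 1) (p : ZMod N) :
    Lnd N (Function.update x p 1) ≤ Lnd N x + 4 * N := by
  set x' := Function.update x p 1 with hx'def
  have hx' : ∀ i, x' i ∈ Set.Icc (0:ℝ) 1 := by
    intro i
    by_cases hip : i = p
    · subst hip; simp [hx'def]
    · rw [hx'def, Function.update_of_ne hip]; exact hx i
  have key : ∀ n d : ZMod N, (if 2 * d ≠ 0 then x' n * x' (n + d) * x' (n + 2 * d) else 0)
      ≤ (if 2 * d ≠ 0 then x n * x (n + d) * x (n + 2 * d) else 0)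
        + ((if n = p then (1:ℝ) else 0) + (if n + d = p then (1:ℝ) else 0)
            + (if n + 2 * d = p then (1:ℝ) else 0)) := by
    intro n d
    have hone : (if 2 * d ≠ 0 then x' n * x' (n + d) * x' (n + 2 * d) else 0) ≤ 1 := by
      split_ifs
      · exact mul_le_one₀ (mul_le_one₀ (hx' n).2 (hx' _).1 (hx' _).2) (hx' _).1 (hx' _).2
      · norm_num
    have hnn : (0:ℝ) ≤ (if 2 * d ≠ 0 then x n * x (n + d) * x (n + 2 * d) else 0) := by
      split_ifs
      · exact mul_nonneg (mul_nonneg (hx n).1 (hx _).1) (hx _).1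
      · exact le_rfl
    by_cases h1 : n = p
    · rw [if_pos h1]
      have ha : (0:ℝ) ≤ if n + d = p then (1:ℝ) else 0 := by positivity
      have hb : (0:ℝ) ≤ if n + 2 * d = p then (1:ℝ) else 0 := by positivity
      linarith
    · by_cases h2 : n + d = p
      · rw [if_pos h2]
        have ha : (0:ℝ) ≤ if n = p then (1:ℝ) else 0 := by positivity
        have hb : (0:ℝ) ≤ if n + 2 * d = p then (1:ℝ) else 0 := by positivity
        linarith
      · by_cases h3 : n + 2 * d = p
        · rw [if_pos h3]
          have ha : (0:ℝ) ≤ if n = p then (1:ℝ) else 0 := by positivity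
          have hb : (0:ℝ) ≤ if n + d = p then (1:ℝ) else 0 := by positivity
          linarith
        · rw [hx'def]
          rw [Function.update_of_ne h1, Function.update_of_ne h2, Function.update_of_ne h3]
          simp [h1, h2, h3]
  calc Lnd N x' ≤ ∑ n : ZMod N, ∑ d : ZMod N,
        ((if 2 * d ≠ 0 then x n * x (n + d) * x (n + 2 * d) else 0)
          + ((if n = p then (1:ℝ) else 0) + (if n + d = p then (1:ℝ) else 0)
              + (if n + 2 * d = p then (1:ℝ) else 0))) :=
      Finset.sum_le_sum fun n _ => Finset.sum_le_sum fun d _ => key n d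
    _ = Lnd N x + (∑ n : ZMod N, ∑ d : ZMod N, ((if n = p then (1:ℝ) else 0)
          + (if n + d = p then (1:ℝ) else 0) + (if n + 2 * d = p then (1:ℝ) else 0))) := by
      rw [Lnd, ← Finset.sum_add_distrib]
      exact Finset.sum_congr rfl fun n _ => Finset.sum_add_distrib
    _ ≤ Lnd N x + 4 * N := by
      have hT : ∀ n : ZMod N, ∑ d : ZMod N, ((if n = p then (1:ℝ) else 0)
          + (if n + d = p then (1:ℝ) else 0) + (if n + 2 * d = p then (1:ℝ) else 0))
          ≤ (if n = p then (1:ℝ) else 0) * N + 1 + 2 := by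
        intro n
        have e1 : ∑ d : ZMod N, (if n = p then (1:ℝ) else 0)
            = (if n = p then (1:ℝ) else 0) * N := by
          rw [Finset.sum_const, Finset.card_univ, ZMod.card, nsmul_eq_mul]; ring
        have e2 : ∑ d : ZMod N, (if n + d = p then (1:ℝ) else 0) = 1 := by
          have : ∀ d : ZMod N, (n + d = p) ↔ (d = p - n) := by
            intro d
            constructor
            · intro h; linear_combination h
            · intro h; linear_combination h
          simp only [this]
          simp [Finset.sum_ite_eq']
        have e3 : ∑ d : ZMod N, (if n + 2 * d = p then (1:ℝ) else 0) ≤ 2 := by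
          have : ∀ d : ZMod N, (n + 2 * d = p) ↔ (2 * d = p - n) := by
            intro d
            constructor
            · intro h; linear_combination h
            · intro h; linear_combination h
          simp only [this]
          rw [Finset.sum_boole]
          exact_mod_cast card_two_mul_eq (p - n)
        calc ∑ d : ZMod N, ((if n = p then (1:ℝ) else 0)
              + (if n + d = p then (1:ℝ) else 0) + (if n + 2 * d = p then (1:ℝ) else 0))
            = (∑ d : ZMod N, (if n = p then (1:ℝ) else 0))
              + (∑ d : ZMod N, (if n + d = p then (1:ℝ) else 0))
              + (∑ d : ZMod N, (if n + 2 * d = p then (1:ℝ) else 0)) := by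
              rw [Finset.sum_add_distrib, Finset.sum_add_distrib]
          _ ≤ (if n = p then (1:ℝ) else 0) * N + 1 + 2 := by rw [e1, e2]; linarith
      have hsum : ∑ n : ZMod N, ∑ d : ZMod N, ((if n = p then (1:ℝ) else 0)
          + (if n + d = p then (1:ℝ) else 0) + (if n + 2 * d = p then (1:ℝ) else 0))
          ≤ ∑ n : ZMod N, ((if n = p then (1:ℝ) else 0) * N + 1 + 2) :=
        Finset.sum_le_sum fun n _ => hT n
      have hr : ∑ n : ZMod N, ((if n = p then (1:ℝ) else 0) * N + 1 + 2) = N + 3 * N := by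
        rw [Finset.sum_add_distrib, Finset.sum_add_distrib, ← Finset.sum_mul]
        simp [Finset.sum_ite_eq', Finset.sum_const, Finset.card_univ, ZMod.card]
        ring
      have hN1 : (1:ℝ) ≤ N := by
        have := Nat.one_le_iff_ne_zero.mpr (NeZero.ne N)
        exact_mod_cast this
      linarith

theorem exists_round (x : ZMod N → ℝ) (hx : ∀ i, x i ∈ Set.Icc (0:ℝ) 1) :
    ∃ S : Finset (ZMod N), (∑ i, x i) ≤ S.card ∧
      Lnd N (fun z => if z ∈ S then (1:ℝ) else 0) ≤ Lnd N x + 4 * N := by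
  -- phase 1: reduce to at most one fractional coordinate
  have phase1 : ∀ (k : ℕ) (y : ZMod N → ℝ), (∀ i, y i ∈ Set.Icc (0:ℝ) 1) →
      (frac y).card ≤ k → ∃ z : ZMod N → ℝ, (∀ i, z i ∈ Set.Icc (0:ℝ) 1) ∧
        (frac z).card ≤ 1 ∧ (∑ i, z i) = ∑ i, y i ∧ Lnd N z ≤ Lnd N y := by
    intro k
    induction k with
    | zero => exact fun y hy h => ⟨y, hy, by omega, rfl, le_rfl⟩
    | succ k ih =>
      intro y hy h
      by_cases h1 : (frac y).card ≤ 1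
      · exact ⟨y, hy, h1, rfl, le_rfl⟩
      · have hcard1 : 1 < (frac y).card := by omega
        obtain ⟨p, hp, q, hq, hpq⟩ := Finset.one_lt_card.mp hcard1
        obtain ⟨z, hz, hcard, hsum, hL⟩ := move y hy p q hpq hp hq
        obtain ⟨w, hw, hwc, hws, hwL⟩ := ih z hz (by omega)
        exact ⟨w, hw, hwc, by rw [hws, hsum], le_trans hwL hL⟩
  obtain ⟨y, hy, hyc, hys, hyL⟩ := phase1 (frac x).card x hx le_rfl
  -- phase 2: kill the last fractional coordinate (if any) by rounding up
  have phase2 : ∃ z : ZMod N → ℝ, (∀ i, z i ∈ Set.Icc (0:ℝ) 1) ∧ (frac z) = ∅ ∧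
      (∑ i, y i) ≤ ∑ i, z i ∧ Lnd N z ≤ Lnd N y + 4 * N := by
    by_cases hone : ∃ p, p ∈ frac y
    · obtain ⟨p, hp⟩ := hone
      refine ⟨Function.update y p 1, ?_, ?_, ?_, bump y hy p⟩
      · intro i
        by_cases hip : i = p
        · subst hip; simp
        · rw [Function.update_of_ne hip]; exact hy i
      · apply Finset.eq_empty_of_forall_notMem
        intro i hi
        obtain ⟨-, h1, h2⟩ := mem_filter.mp hi
        by_cases hip : i = p
        · subst hip; simp at h2
        · rw [Function.update_of_ne hip] at h1 h2
          have : i = p := Finset.card_le_one.mp hyc i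
            (mem_filter.mpr ⟨mem_univ _, h1, h2⟩) p hp
          exact hip this
      · refine Finset.sum_le_sum fun i _ => ?_
        by_cases hip : i = p
        · subst hip; simp [(hy i).2]
        · rw [Function.update_of_ne hip]
    · refine ⟨y, hy, ?_, le_rfl, ?_⟩
      · exact Finset.eq_empty_of_forall_notMem fun i hi => hone ⟨i, hi⟩
      · have : (0:ℝ) ≤ 4 * N := by positivity
        linarith
  obtain ⟨z, hz, hzf, hzs, hzL⟩ := phase2
  refine ⟨univ.filter (fun i => z i = 1), ?_, ?_⟩
  · have hzi : ∀ i, z i = (if i ∈ univ.filter (fun j => z j = 1) then (1:ℝ) else 0) := by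
      intro i
      by_cases h : z i = 1
      · simp [h]
      · have h0 : z i = 0 := by
          by_contra h0
          exact (Finset.eq_empty_iff_forall_notMem.mp hzf i)
            (mem_filter.mpr ⟨mem_univ _, h0, h⟩)
        simp [h0, h]
    calc (∑ i, x i) = ∑ i, y i := hys.symm
      _ ≤ ∑ i, z i := hzs
      _ = ∑ i, (if i ∈ univ.filter (fun j => z j = 1) then (1:ℝ) else 0) :=
          Finset.sum_congr rfl fun i _ => hzi i
      _ = (univ.filter (fun i => z i = 1)).card := by
          rw [Finset.sum_boole]
          simp
  · have hzeq : (fun i => if i ∈ univ.filter (fun j => z j = 1) then (1:ℝ) else 0) = z := by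
      funext i
      by_cases h : z i = 1
      · simp [h]
      · have h0 : z i = 0 := by
          by_contra h0
          exact (Finset.eq_empty_iff_forall_notMem.mp hzf i)
            (mem_filter.mpr ⟨mem_univ _, h0, h⟩)
        simp [h0, h]
    rw [hzeq]
    calc Lnd N z ≤ Lnd N y + 4 * N := hzL
      _ ≤ Lnd N x + 4 * N := by linarith

end Aux

theorem functions_to_sets (υ : ℝ) (hυ : υ ∈ Set.Ioc (0 : ℝ) 1) (ε : ℝ) (hε : 0 < ε) :
    ∃ N₀ : ℕ, ∀ N : ℕ, N₀ ≤ N →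
      ∀ f : ZMod N → ℝ, (∀ n, f n ∈ Set.Icc (0 : ℝ) 1) → υ ≤ expect N f →
        ∃ S : Finset (ZMod N), υ * N ≤ S.card ∧
          lambda3 N (fun n => if n ∈ S then 1 else 0) < lambda3 N f + ε := by
  refine ⟨max 1 (Nat.ceil ((6:ℝ)/ε) + 1), ?_⟩
  intro N hN f hf hexp
  have hN1 : 1 ≤ N := le_trans (le_max_left _ _) hN
  haveI : NeZero N := ⟨by omega⟩
  have hNpos : (0:ℝ) < N := by exact_mod_cast hN1
  have hNe : (6:ℝ)/ε < N := by
    have h1 : Nat.ceil ((6:ℝ)/ε) + 1 ≤ N := le_trans (le_max_right _ _) hN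
    have h2 : ((6:ℝ)/ε) ≤ Nat.ceil ((6:ℝ)/ε) := Nat.le_ceil _
    have h3 : (Nat.ceil ((6:ℝ)/ε) : ℝ) + 1 ≤ N := by exact_mod_cast h1
    linarith
  obtain ⟨S, hcard, hLnd⟩ := exists_round f hf
  refine ⟨S, ?_, ?_⟩
  · have hr : υ * N ≤ ∑ n ∈ range N, f n := by
      have h : υ ≤ (N : ℝ)⁻¹ * ∑ n ∈ range N, f n := hexp
      calc υ * N ≤ ((N:ℝ)⁻¹ * ∑ n ∈ range N, f n) * N := by nlinarith
        _ = ∑ n ∈ range N, f n := by field_simp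
    calc υ * N ≤ ∑ n ∈ range N, f n := hr
      _ = ∑ z : ZMod N, f z := sum_range_zmod f
      _ ≤ S.card := hcard
  · have hind : ∀ i : ZMod N, (if i ∈ S then (1:ℝ) else 0) ∈ Set.Icc (0:ℝ) 1 := by
      intro i; split_ifs <;> simp
    have h1 : lambda3 N (fun n => if n ∈ S then (1:ℝ) else 0)
        = ((N:ℝ)^2)⁻¹ * Lfull N (fun n => if n ∈ S then (1:ℝ) else 0) := lambda3_eq _
    have h2 := Lfull_le_Lnd (fun n => if n ∈ S then (1:ℝ) else 0) hind
    have h3 := Lnd_le_Lfull f (fun i => (hf i).1)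
    have h4 : lambda3 N f = ((N:ℝ)^2)⁻¹ * Lfull N f := lambda3_eq f
    have hinv : (0:ℝ) < ((N:ℝ)^2)⁻¹ := by positivity
    have h5 : Lfull N (fun n => if n ∈ S then (1:ℝ) else 0) ≤ Lfull N f + 6*N := by
      linarith
    have h6 : ((N:ℝ)^2)⁻¹ * (6*N) < ε := by
      have he1 : ((N:ℝ)^2)⁻¹ * (6*N) = 6 / N := by
        field_simp
      have he2 : (6:ℝ) < ε * N := by
        have := (div_lt_iff₀ hε).mp hNe
        linarith
      rw [he1, div_lt_iff₀ hNpos]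
      linarith
    calc lambda3 N (fun n => if n ∈ S then (1:ℝ) else 0)
        = ((N:ℝ)^2)⁻¹ * Lfull N (fun n => if n ∈ S then (1:ℝ) else 0) := h1
      _ ≤ ((N:ℝ)^2)⁻¹ * (Lfull N f + 6*N) := by
          exact mul_le_mul_of_nonneg_left h5 (le_of_lt hinv)
      _ = lambda3 N f + ((N:ℝ)^2)⁻¹ * (6*N) := by rw [h4]; ring
      _ < lambda3 N f + ε := by linarith
end
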